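/- arXiv:1812.08486 — 2 statements merged into one kernel-verified Lean document; each statement's English description precedes it below -/
import Mathlib

section
/- The resolvent of the second kind of any kernel k ∈ L²_loc(ℝ₊), if it exists, is unique: if r₁ and r₂ both satisfy k − rᵢ = rᵢ * k (where * denotes convolution ∫₀ᵗ rᵢ(t−s)k(s)ds), then r₁ = r₂ almost everywhere. -/
/-!
The difference `d = r₁ - r₂` solves the homogeneous equation `d = d * (-k)`. For `t ≤ T`,
Cauchy–Schwarz gives `d(t)² ≤ C ∫₀ᵗ d²` with `C = ∫₀ᵀ k²`, so `F(t) = ∫₀ᵗ d²` satisfies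
`F(t) ≤ C ∫₀ᵗ F`. Iterating this bound yields `F(t) ≤ F(T) (C t)ⁿ / n!` for every `n`,
hence `F = 0` on `[0, T]` and `d = 0` a.e.
-/

open MeasureTheory Set Filter
open scoped Nat Topology

theorem sq_integral_mul_le {α : Type*} [MeasurableSpace α] {μ : Measure α} {f g : α → ℝ}
    (hf : MemLp f 2 μ) (hg : MemLp g 2 μ) :
    (∫ a, f a * g a ∂μ) ^ 2 ≤ (∫ a, f a ^ 2 ∂μ) * ∫ a, g a ^ 2 ∂μ := by
  have holder := integral_mul_norm_le_Lp_mul_Lq Real.HolderConjugate.two_two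
    (by simpa using hf) (by simpa using hg)
  simp only [Real.norm_eq_abs, Real.rpow_two, sq_abs] at holder
  have hfg : |∫ a, f a * g a ∂μ| ≤ √(∫ a, f a ^ 2 ∂μ) * √(∫ a, g a ^ 2 ∂μ) := by
    rw [Real.sqrt_eq_rpow, Real.sqrt_eq_rpow]
    calc |∫ a, f a * g a ∂μ| ≤ ∫ a, |f a| * |g a| ∂μ := by
          simpa only [abs_mul] using abs_integral_le_integral_abs (f := fun a => f a * g a)
      _ ≤ _ := holder
  calc (∫ a, f a * g a ∂μ) ^ 2 = |∫ a, f a * g a ∂μ| ^ 2 := (sq_abs _).symm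
    _ ≤ (√(∫ a, f a ^ 2 ∂μ) * √(∫ a, g a ^ 2 ∂μ)) ^ 2 := by gcongr
    _ = _ := by
      rw [mul_pow, Real.sq_sqrt (integral_nonneg fun _ => sq_nonneg _),
        Real.sq_sqrt (integral_nonneg fun _ => sq_nonneg _)]

theorem le_mul_pow_div_factorial_of_le_integral {F : ℝ → ℝ} {C M T : ℝ} (hC : 0 ≤ C)
    (hF_int : IntervalIntegrable F volume 0 T) (hM : ∀ t ∈ Icc 0 T, F t ≤ M)
    (hF : ∀ t ∈ Icc 0 T, F t ≤ C * ∫ s in 0..t, F s) (n : ℕ) :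
    ∀ t ∈ Icc 0 T, F t ≤ M * (C * t) ^ n / n ! := by
  induction n with
  | zero => simpa using hM
  | succ n ih =>
    intro t ht
    have hsub : uIcc 0 t ⊆ uIcc 0 T := uIcc_subset_uIcc_left (Icc_subset_uIcc ht)
    calc F t ≤ C * ∫ s in 0..t, F s := hF t ht
      _ ≤ C * ∫ s in 0..t, M * (C * s) ^ n / n ! := by
          gcongr
          exact intervalIntegral.integral_mono_on ht.1 (hF_int.mono_set hsub)
            (Continuous.intervalIntegrable (by fun_prop) _ _)
            fun s hs => ih s ⟨hs.1, hs.2.trans ht.2⟩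
      _ = M * (C * t) ^ (n + 1) / (n + 1)! := by
          have hpoly : (fun s => M * (C * s) ^ n / n !) = fun s => M * C ^ n / n ! * s ^ n := by
            ext s; ring
          rw [hpoly, intervalIntegral.integral_const_mul, integral_pow, Nat.factorial_succ]
          push_cast
          field_simp
          ring

theorem eq_zero_of_le_mul_integral {F : ℝ → ℝ} {C M T : ℝ} (hC : 0 ≤ C)
    (hF_int : IntervalIntegrable F volume 0 T) (hM : ∀ t ∈ Icc 0 T, F t ≤ M)
    (hF_nonneg : ∀ t ∈ Icc 0 T, 0 ≤ F t) (hF : ∀ t ∈ Icc 0 T, F t ≤ C * ∫ s in 0..t, F s) :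
    ∀ t ∈ Icc 0 T, F t = 0 := by
  intro t ht
  have hlim : Tendsto (fun n : ℕ => M * (C * t) ^ n / n !) atTop (𝓝 0) := by
    simpa [mul_div_assoc] using
      (FloorSemiring.tendsto_pow_div_factorial_atTop (C * t)).const_mul M
  exact le_antisymm (ge_of_tendsto' hlim fun n =>
    le_mul_pow_div_factorial_of_le_integral hC hF_int hM hF n t ht) (hF_nonneg t ht)

theorem ae_restrict_Ici_of_forall_Ioc {μ : Measure ℝ} [NullSingletonClass μ] {p : ℝ → Prop}
    {a : ℝ}
    (h : ∀ T > a, ∀ᵐ t ∂μ.restrict (Ioc a T), p t) : ∀ᵐ t ∂μ.restrict (Ici a), p t := by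
  have hcover : ⋃ n : ℕ, Ioc a (a + n + 1) = Ioi a := iUnion_Ioc_eq_Ioi_self_iff.2 fun x _ => by
    obtain ⟨n, hn⟩ := exists_nat_ge (x - a)
    exact ⟨n, by linarith⟩
  rw [← Measure.restrict_congr_set Ioi_ae_eq_Ici, ← hcover, ae_restrict_iUnion_iff]
  exact fun n => h _ (by linarith [n.cast_nonneg (α := ℝ)])

/-- Membership in `L²_loc(ℝ₊)`. -/
def LocSqIntegrable (f : ℝ → ℝ) : Prop :=
  Measurable f ∧ ∀ T > 0, IntegrableOn (fun t => f t ^ 2) (Ioc 0 T)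

namespace LocSqIntegrable

variable {f g : ℝ → ℝ}

theorem integrableOn_sq (hf : LocSqIntegrable f) (T : ℝ) :
    IntegrableOn (fun t => f t ^ 2) (Ioc 0 T) := by
  rcases le_or_gt T 0 with hT | hT
  · simp [Ioc_eq_empty_of_le hT]
  · exact hf.2 T hT

theorem intervalIntegrable_sq (hf : LocSqIntegrable f) {t : ℝ} (ht : 0 ≤ t) :
    IntervalIntegrable (fun s => f s ^ 2) volume 0 t :=
  (intervalIntegrable_iff_integrableOn_Ioc_of_le ht).2 (hf.integrableOn_sq t)

theorem integral_sq_mono (hf : LocSqIntegrable f) {a b : ℝ} (ha : 0 ≤ a) (hab : a ≤ b) :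
    ∫ s in 0..a, f s ^ 2 ≤ ∫ s in 0..b, f s ^ 2 :=
  intervalIntegral.integral_mono_interval le_rfl ha hab (ae_of_all _ fun _ => sq_nonneg _)
    (hf.intervalIntegrable_sq (ha.trans hab))

theorem memLp (hf : LocSqIntegrable f) (T : ℝ) : MemLp f 2 (volume.restrict (Ioc 0 T)) :=
  (memLp_two_iff_integrable_sq hf.1.aestronglyMeasurable).2 (hf.integrableOn_sq T)

theorem memLp_comp_sub_left (hf : LocSqIntegrable f) {t : ℝ} (ht : 0 ≤ t) :
    MemLp (fun s => f (t - s)) 2 (volume.restrict (Ioc 0 t)) := by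
  refine (memLp_two_iff_integrable_sq
    (hf.1.comp (measurable_const.sub measurable_id)).aestronglyMeasurable).2 ?_
  refine (intervalIntegrable_iff_integrableOn_Ioc_of_le ht).1 ?_
  simpa using ((hf.intervalIntegrable_sq ht).comp_sub_left t).symm

theorem sub (hf : LocSqIntegrable f) (hg : LocSqIntegrable g) : LocSqIntegrable (f - g) :=
  ⟨hf.1.sub hg.1, fun T _ => (memLp_two_iff_integrable_sq (hf.1.sub hg.1).aestronglyMeasurable).1
    ((hf.memLp T).sub (hg.memLp T))⟩

theorem neg (hf : LocSqIntegrable f) : LocSqIntegrable (-f) :=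
  ⟨hf.1.neg, by simpa using hf.2⟩

end LocSqIntegrable

noncomputable def volterraConv (f g : ℝ → ℝ) (t : ℝ) : ℝ := ∫ s in 0..t, f (t - s) * g s

section volterraConv

variable {f f₁ f₂ g : ℝ → ℝ} {t : ℝ}

theorem intervalIntegrable_comp_sub_left_mul (hf : LocSqIntegrable f) (hg : LocSqIntegrable g)
    (ht : 0 ≤ t) : IntervalIntegrable (fun s => f (t - s) * g s) volume 0 t :=
  (intervalIntegrable_iff_integrableOn_Ioc_of_le ht).2
    ((hf.memLp_comp_sub_left ht).integrable_mul (hg.memLp t))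

theorem volterraConv_sub_left (hf₁ : LocSqIntegrable f₁) (hf₂ : LocSqIntegrable f₂)
    (hg : LocSqIntegrable g) (ht : 0 ≤ t) :
    volterraConv (f₁ - f₂) g t = volterraConv f₁ g t - volterraConv f₂ g t := by
  simp only [volterraConv, Pi.sub_apply, sub_mul]
  exact intervalIntegral.integral_sub (intervalIntegrable_comp_sub_left_mul hf₁ hg ht)
    (intervalIntegrable_comp_sub_left_mul hf₂ hg ht)

theorem volterraConv_neg_right : volterraConv f (-g) t = -volterraConv f g t := by
  simp [volterraConv]

theorem sq_volterraConv_le (hf : LocSqIntegrable f) (hg : LocSqIntegrable g) (ht : 0 ≤ t) :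
    volterraConv f g t ^ 2 ≤ (∫ s in 0..t, f s ^ 2) * ∫ s in 0..t, g s ^ 2 := by
  have hreflect : ∫ s in 0..t, f s ^ 2 = ∫ s in 0..t, f (t - s) ^ 2 := by
    simp [intervalIntegral.integral_comp_sub_left (fun s => f s ^ 2) t]
  rw [hreflect, volterraConv]
  simp only [intervalIntegral.integral_of_le ht]
  exact sq_integral_mul_le (hf.memLp_comp_sub_left ht) (hg.memLp t)

end volterraConv

theorem ae_eq_zero_of_eq_volterraConv {d k : ℝ → ℝ} (hd : LocSqIntegrable d)
    (hk : LocSqIntegrable k) (heq : ∀ᵐ t ∂volume.restrict (Ici 0), d t = volterraConv d k t) :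
    ∀ᵐ t ∂volume.restrict (Ici 0), d t = 0 := by
  refine ae_restrict_Ici_of_forall_Ioc fun T hT => ?_
  set F : ℝ → ℝ := fun t => ∫ s in 0..t, d s ^ 2
  set C : ℝ := ∫ s in 0..T, k s ^ 2
  have hF_mono : MonotoneOn F (Icc 0 T) := fun a ha b _ hab => hd.integral_sq_mono ha.1 hab
  have hF_nonneg : ∀ t ∈ Icc 0 T, 0 ≤ F t := fun t ht =>
    intervalIntegral.integral_nonneg ht.1 fun _ _ => sq_nonneg _
  have hF_int : IntervalIntegrable F volume 0 T :=
    MonotoneOn.intervalIntegrable (by rwa [uIcc_of_le hT.le])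
  have hpointwise : ∀ᵐ t ∂volume.restrict (Ici 0), t ≤ T → d t ^ 2 ≤ C * F t := by
    filter_upwards [heq, ae_restrict_mem measurableSet_Ici] with t ht h0 htT
    calc d t ^ 2 = volterraConv d k t ^ 2 := by rw [ht]
      _ ≤ F t * ∫ s in 0..t, k s ^ 2 := sq_volterraConv_le hd hk h0
      _ ≤ F t * C := by gcongr; exacts [hF_nonneg t ⟨h0, htT⟩, hk.integral_sq_mono h0 htT]
      _ = C * F t := mul_comm _ _
  have hgronwall : ∀ t ∈ Icc 0 T, F t ≤ C * ∫ s in 0..t, F s := by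
    intro t ht
    rw [← intervalIntegral.integral_const_mul]
    refine intervalIntegral.integral_mono_ae_restrict ht.1 (hd.intervalIntegrable_sq ht.1)
      ((hF_int.mono_set (uIcc_subset_uIcc_left (Icc_subset_uIcc ht))).const_mul C) ?_
    filter_upwards [ae_restrict_of_ae_restrict_of_subset Icc_subset_Ici_self hpointwise,
      ae_restrict_mem measurableSet_Icc] with s hs hsIcc
    exact hs (hsIcc.2.trans ht.2)
  have hC : 0 ≤ C := intervalIntegral.integral_nonneg hT.le fun _ _ => sq_nonneg _
  have hFT : F T = 0 := eq_zero_of_le_mul_integral hC hF_int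
    (fun t ht => hF_mono ht ⟨hT.le, le_rfl⟩ ht.2) hF_nonneg hgronwall T ⟨hT.le, le_rfl⟩
  filter_upwards [(intervalIntegral.integral_eq_zero_iff_of_le_of_nonneg_ae hT.le
    (ae_of_all _ fun _ => sq_nonneg _) (hd.intervalIntegrable_sq hT.le)).1 hFT] with t ht
  exact pow_eq_zero_iff two_ne_zero |>.1 ht

/-- Uniqueness of the resolvent of the second kind: if `r₁` and `r₂` are both in
`L²_loc(ℝ₊)` and both satisfy `k - rᵢ = rᵢ * k` a.e. on `ℝ₊` (Volterra convolution),
then `r₁ = r₂` a.e. on `ℝ₊`. -/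
theorem resolvent_unique (k r₁ r₂ : ℝ → ℝ)
    (hk : ∀ T > (0:ℝ), IntegrableOn (fun t => (k t) ^ 2) (Ioc 0 T))
    (hr₁ : ∀ T > (0:ℝ), IntegrableOn (fun t => (r₁ t) ^ 2) (Ioc 0 T))
    (hr₂ : ∀ T > (0:ℝ), IntegrableOn (fun t => (r₂ t) ^ 2) (Ioc 0 T))
    (hmk : Measurable k) (hm₁ : Measurable r₁) (hm₂ : Measurable r₂)
    (heq₁ : ∀ᵐ t ∂(volume.restrict (Ici (0:ℝ))),
      k t - r₁ t = ∫ s in (0:ℝ)..t, r₁ (t - s) * k s)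
    (heq₂ : ∀ᵐ t ∂(volume.restrict (Ici (0:ℝ))),
      k t - r₂ t = ∫ s in (0:ℝ)..t, r₂ (t - s) * k s) :
    ∀ᵐ t ∂(volume.restrict (Ici (0:ℝ))), r₁ t = r₂ t := by
  have hk' : LocSqIntegrable k := ⟨hmk, hk⟩
  have hr₁' : LocSqIntegrable r₁ := ⟨hm₁, hr₁⟩
  have hr₂' : LocSqIntegrable r₂ := ⟨hm₂, hr₂⟩
  have hdiff : ∀ᵐ t ∂volume.restrict (Ici 0),
      (r₁ - r₂) t = volterraConv (r₁ - r₂) (-k) t := by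
    filter_upwards [heq₁, heq₂, ae_restrict_mem measurableSet_Ici] with t h₁ h₂ ht
    rw [volterraConv_neg_right, volterraConv_sub_left hr₁' hr₂' hk' ht, volterraConv,
      volterraConv, Pi.sub_apply, ← h₁, ← h₂]
    ring
  filter_upwards [ae_eq_zero_of_eq_volterraConv (hr₁'.sub hr₂') hk'.neg hdiff] with t ht
  exact sub_eq_zero.1 ht
end

section
/- Fix T > 0, a measurable h : ℝ₊ → ℝ, K ∈ L²_loc(ℝ₊), and continuous R_Ψ : ℝ → ℝ. Suppose Ψ : [0,T] × ℝ₊ → ℝ satisfies the mild Riccati equation Ψ(t,x) = h(x−t)·𝟏_{x≥t} + R_Ψ(∫₀^∞ Ψ(t−x,y)K(y)dy)·𝟏_{x<t}, and define ψ(t) = ∫₀^∞ Ψ(t,x) K(x) dx (assumed finite for all t ∈ [0,T]). Then ψ satisfies the Volterra equation ψ(t) = ∫₀^∞ h(x) K(t+x) dx + ∫₀ᵗ K(t−s) R_Ψ(ψ(s)) ds for all t ∈ [0,T]. -/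
open MeasureTheory Real Set

/-!
Splitting `ψ(t) = ∫₀^∞ Ψ(t,x) K(x) dx` at `x = t`, the mild equation turns the integrand into
`h(x - t) K(x)` beyond `t` and into `R_Ψ(ψ(t - x)) K(x)` before `t`. The translation `x ↦ x - t`
makes the first piece `∫₀^∞ h(x) K(t + x) dx`, and the reflection `x ↦ t - x` makes the second
the convolution `∫₀ᵗ K(t - s) R_Ψ(ψ(s)) ds`.
-/

section

variable {E : Type*} [NormedAddCommGroup E] [NormedSpace ℝ E]

theorem setIntegral_Ioi_comp_sub_right (f : ℝ → E) (t : ℝ) :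
    ∫ x in Ioi t, f (x - t) = ∫ x in Ioi 0, f x := by
  have hpre : (· - t) ⁻¹' Ioi (0 : ℝ) = Ioi t := by ext x; simp
  rw [← hpre]
  exact (measurePreserving_sub_right volume t).setIntegral_preimage_emb
    (measurableEmbedding_subRight t) f (Ioi 0)

theorem setIntegral_Ioc_comp_sub_left (f : ℝ → E) {t : ℝ} (ht : 0 ≤ t) :
    ∫ x in Ioc 0 t, f (t - x) = ∫ s in 0..t, f s := by
  rw [← intervalIntegral.integral_of_le ht, intervalIntegral.integral_comp_sub_left, sub_self,
    sub_zero]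

theorem integral_Ioi_ite_sub {t : ℝ} (ht : 0 ≤ t) {a b : ℝ → E}
    (hint : IntegrableOn (fun x => if t ≤ x then a (x - t) else b (t - x)) (Ioi 0)) :
    ∫ x in Ioi 0, (if t ≤ x then a (x - t) else b (t - x))
      = (∫ x in Ioi 0, a x) + ∫ s in 0..t, b s := by
  have hbefore : ∫ x in Ioc 0 t, (if t ≤ x then a (x - t) else b (t - x))
      = ∫ x in Ioc 0 t, b (t - x) := by
    rw [integral_Ioc_eq_integral_Ioo, integral_Ioc_eq_integral_Ioo]
    exact setIntegral_congr_fun measurableSet_Ioo fun x hx => if_neg (not_le.mpr hx.2)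
  have hbeyond : ∫ x in Ioi t, (if t ≤ x then a (x - t) else b (t - x))
      = ∫ x in Ioi t, a (x - t) :=
    setIntegral_congr_fun measurableSet_Ioi fun x hx => if_pos (le_of_lt hx)
  rw [← intervalIntegral.integral_interval_add_Ioi hint (hint.mono_set (Ioi_subset_Ioi ht)),
    intervalIntegral.integral_of_le ht, hbefore, hbeyond, setIntegral_Ioc_comp_sub_left _ ht,
    setIntegral_Ioi_comp_sub_right, add_comm]

end

theorem spde_riccati_to_volterra_general
    (T : ℝ) (h K : ℝ → ℝ) (RΨ : ℝ → ℝ)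
    (Ψ : ℝ → ℝ → ℝ) (ψ : ℝ → ℝ)
    (hψ : ∀ t ∈ Icc (0:ℝ) T, ψ t = ∫ x in Ioi (0:ℝ), Ψ t x * K x)
    (hmild : ∀ t ∈ Icc (0:ℝ) T, ∀ x : ℝ, 0 ≤ x →
      Ψ t x = if t ≤ x then h (x - t)
              else RΨ (∫ y in Ioi (0:ℝ), Ψ (t - x) y * K y))
    (hInt₁ : ∀ t ∈ Icc (0:ℝ) T, IntegrableOn (fun x => Ψ t x * K x) (Ioi (0:ℝ))) :
    ∀ t ∈ Icc (0:ℝ) T,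
      ψ t = (∫ x in Ioi (0:ℝ), h x * K (t + x))
              + ∫ s in (0:ℝ)..t, K (t - s) * RΨ (ψ s) := by
  intro t ht
  set a : ℝ → ℝ := fun u => h u * K (t + u)
  set b : ℝ → ℝ := fun s => K (t - s) * RΨ (ψ s)
  have hΨK : EqOn (fun x => Ψ t x * K x) (fun x => if t ≤ x then a (x - t) else b (t - x))
      (Ioi 0) := by
    intro x hx
    simp only [a, b, hmild t ht x (le_of_lt hx), add_sub_cancel, sub_sub_cancel]
    split_ifs with htx
    · rfl
    · rw [hψ (t - x) ⟨by linarith, by linarith [ht.2, mem_Ioi.mp hx]⟩, mul_comm]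
  rw [hψ t ht, setIntegral_congr_fun measurableSet_Ioi hΨK]
  exact integral_Ioi_ite_sub ht.1 ((hInt₁ t ht).congr_fun hΨK measurableSet_Ioi)

/-- From the mild SPDE-form Riccati equation
`Ψ(t,x) = h(x-t)𝟏_{x≥t} + R_Ψ(∫₀^∞ Ψ(t-x,y)K(y)dy)𝟏_{x<t}` to the Volterra equation
`ψ(t) = ∫₀^∞ h(x)K(t+x)dx + ∫₀ᵗ K(t-s)R_Ψ(ψ(s))ds`, where
`ψ(t) = ∫₀^∞ Ψ(t,x)K(x)dx`. -/
theorem spde_riccati_to_volterra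
    (T : ℝ) (hT : 0 < T) (h K : ℝ → ℝ) (RΨ : ℝ → ℝ) (hRΨ : Continuous RΨ)
    (hmeas : Measurable h)
    (hL2K : ∀ S > (0:ℝ), IntegrableOn (fun t => (K t) ^ 2) (Ioc 0 S))
    (Ψ : ℝ → ℝ → ℝ) (ψ : ℝ → ℝ)
    (hψ : ∀ t ∈ Icc (0:ℝ) T, ψ t = ∫ x in Ioi (0:ℝ), Ψ t x * K x)
    (hmild : ∀ t ∈ Icc (0:ℝ) T, ∀ x : ℝ, 0 ≤ x →
      Ψ t x = if t ≤ x then h (x - t)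
              else RΨ (∫ y in Ioi (0:ℝ), Ψ (t - x) y * K y))
    (hInt₁ : ∀ t ∈ Icc (0:ℝ) T, IntegrableOn (fun x => Ψ t x * K x) (Ioi (0:ℝ)))
    (hInt₂ : ∀ t ∈ Icc (0:ℝ) T, IntegrableOn (fun x => h x * K (t + x)) (Ioi (0:ℝ)))
    (hInt₃ : ∀ t ∈ Icc (0:ℝ) T,
      IntervalIntegrable (fun s => K (t - s) * RΨ (ψ s)) volume 0 t) :
    ∀ t ∈ Icc (0:ℝ) T,
      ψ t = (∫ x in Ioi (0:ℝ), h x * K (t + x))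
              + ∫ s in (0:ℝ)..t, K (t - s) * RΨ (ψ s) :=
  spde_riccati_to_volterra_general T h K RΨ Ψ ψ hψ hmild hInt₁
end
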